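/- arXiv:0707.3151 — 5 statements merged into one kernel-verified Lean document; each statement's English description precedes it below -/
import Mathlib

section
/- Let R be a commutative Q-algebra and X, Y two variables. Then every monomial X^n Y^m in R[X,Y] can be written as a Q-linear combination of polynomials of the form (X+aY)^{n+m} with a ∈ Q (in fact with a ∈ {0,1,...,n+m}). -/
open MvPolynomial

theorem Matrix.vecMul_vandermonde_surjective {K : Type*} [Field K] {N : ℕ} {v : Fin N → K}
    (hv : Function.Injective v) :
    Function.Surjective fun c => Matrix.vecMul c (Matrix.vandermonde v) :=
  Matrix.vecMul_surjective_iff_isUnit.mpr <| (Matrix.isUnit_iff_isUnit_det _).mpr <|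
    isUnit_iff_ne_zero.mpr <| Matrix.det_vandermonde_ne_zero_iff.mpr hv

section

variable {K A : Type*} [Field K] [CommRing A] [Algebra K A]

theorem add_algebraMap_mul_pow_eq_sum (x y : A) (a : K) (N : ℕ) :
    (x + algebraMap K A a * y) ^ N =
      ∑ k : Fin (N + 1), (a ^ (k : ℕ) * N.choose k) • (x ^ (N - k) * y ^ (k : ℕ)) := by
  rw [add_comm, add_pow, ← Fin.sum_univ_eq_sum_range]
  refine Finset.sum_congr rfl fun k _ => ?_
  rw [Algebra.smul_def]
  simp only [map_mul, map_pow, map_natCast]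
  ring

/-- Choosing `c` with `∑ i, c i * i ^ k = δ_{jk}` (possible by invertibility of the
Vandermonde matrix `(i ^ k)`) kills every term of the binomial expansions except the `j`-th. -/
theorem exists_sum_smul_add_algebraMap_mul_pow_eq [CharZero K] (x y : A) (N : ℕ)
    (j : Fin (N + 1)) :
    ∃ c : Fin (N + 1) → K, ∑ i : Fin (N + 1), c i • (x + algebraMap K A (i : ℕ) * y) ^ N =
      (N.choose j : K) • (x ^ (N - j) * y ^ (j : ℕ)) := by
  have hinj : Function.Injective fun i : Fin (N + 1) => ((i : ℕ) : K) :=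
    fun i i' h => Fin.val_injective (Nat.cast_injective h)
  obtain ⟨c, hc⟩ := Matrix.vecMul_vandermonde_surjective hinj (Pi.single j 1)
  refine ⟨c, ?_⟩
  have hc' : ∀ k : Fin (N + 1),
      ∑ i, c i * ((i : ℕ) : K) ^ (k : ℕ) = (Pi.single j 1 : Fin (N + 1) → K) k :=
    fun k => congrFun hc k
  simp_rw [add_algebraMap_mul_pow_eq_sum, Finset.smul_sum, smul_smul]
  rw [Finset.sum_comm]
  simp_rw [← mul_assoc, ← Finset.sum_smul, ← Finset.sum_mul, hc']
  rw [Fintype.sum_eq_single j fun k hk => by simp [hk]]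
  simp

theorem pow_mul_pow_mem_span_add_algebraMap_mul_pow [CharZero K] (x y : A) (n m : ℕ) :
    x ^ n * y ^ m ∈
      Submodule.span K {p | ∃ a : K, p = (x + algebraMap K A a * y) ^ (n + m)} := by
  obtain ⟨c, hc⟩ := exists_sum_smul_add_algebraMap_mul_pow_eq (K := K) x y (n + m)
    ⟨m, by omega⟩
  have hchoose : ((n + m).choose m : K) ≠ 0 := by
    exact_mod_cast (Nat.choose_pos (by omega)).ne'
  simp only [Nat.add_sub_cancel] at hc
  rw [← inv_smul_smul₀ hchoose (x ^ n * y ^ m), ← hc]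
  exact Submodule.smul_mem _ _ <| Submodule.sum_mem _ fun i _ =>
    Submodule.smul_mem _ _ <| Submodule.subset_span ⟨_, rfl⟩

end

/-- Over a commutative `ℚ`-algebra `R`, every monomial `X^n Y^m` in `R[X,Y]` is a
`ℚ`-linear combination of polynomials of the form `(X + aY)^(n+m)` with `a ∈ ℚ`. -/
theorem monomial_mem_span_powers_of_linear_forms
    (R : Type*) [CommRing R] [Algebra ℚ R] (n m : ℕ) :
    (X 0 ^ n * X 1 ^ m : MvPolynomial (Fin 2) R) ∈
      Submodule.span ℚ
        {p : MvPolynomial (Fin 2) R |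
          ∃ a : ℚ, p = (X 0 + C (algebraMap ℚ R a) * X 1) ^ (n + m)} := by
  simpa only [MvPolynomial.algebraMap_apply] using
    pow_mul_pow_mem_span_add_algebraMap_mul_pow (K := ℚ) (X 0 : MvPolynomial (Fin 2) R) (X 1) n m
end

section
/- Let R be a commutative ring and a ∈ R with a² = 0, and m ≥ 1 an integer. Then the map ω = (X + aX^m, (1 - m a X^{m-1}) Z) of R[X,Z] is an R-algebra automorphism, and it is a product of elementary automorphisms; explicitly ω = α β α⁻¹ β⁻¹ γ where α = (X - aZ, Z), β = (X, Z - X^m), and γ = (X, Z + (X + aX^m)^m - X^m). -/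
/-!
Each of `α`, `β`, `γ` adds to one variable a polynomial in the other, so it is an elementary
automorphism and `ω` lies in `EA R 2`. The values of `ω` on `X` and `Z` follow by composing the
five substitutions; since `a² = 0`, every `m`-th power that occurs expands to first order,
`(u + a v) ^ m = u ^ m + m a u ^ (m - 1) v`, after which the identities are ring identities.
-/

open MvPolynomial

noncomputable section

/-- An elementary automorphism of the polynomial ring: it adds to one variable `X i`
a polynomial `f` not involving `X i`, and fixes all other variables. -/
def IsElementaryAut {R : Type*} [CommRing R] {n : ℕ}
    (e : MvPolynomial (Fin n) R ≃ₐ[R] MvPolynomial (Fin n) R) : Prop :=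
  ∃ (i : Fin n) (f : MvPolynomial (Fin n) R), degreeOf i f = 0 ∧
    e (X i) = X i + f ∧ ∀ j : Fin n, j ≠ i → e (X j) = X j

/-- `EA R n`: the subgroup generated by elementary automorphisms. -/
def EA (R : Type*) [CommRing R] (n : ℕ) :
    Subgroup (MvPolynomial (Fin n) R ≃ₐ[R] MvPolynomial (Fin n) R) :=
  Subgroup.closure {e | IsElementaryAut e}

open Function (update)

theorem add_mul_pow_of_mul_self_eq_zero {S : Type*} [CommSemiring S] {b : S} (hb : b * b = 0)
    (u v : S) : ∀ m : ℕ, (u + b * v) ^ m = u ^ m + m * b * u ^ (m - 1) * v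
  | 0 => by simp
  | 1 => by simp
  | m + 2 => by
    rw [pow_succ, add_mul_pow_of_mul_self_eq_zero hb u v (m + 1)]
    push_cast
    calc _ = u ^ (m + 2) + (m + 2) * b * u ^ (m + 1) * v + (m + 1) * u ^ m * v ^ 2 * (b * b) := by
          ring
      _ = _ := by rw [hb]; ring

namespace MvPolynomial

variable {R σ : Type*} [CommRing R]

theorem X_mem_supported_of_mem {s : Set σ} {i : σ} (hi : i ∈ s) :
    (X i : MvPolynomial σ R) ∈ supported R s :=
  Algebra.subset_adjoin (Set.mem_image_of_mem X hi)

theorem algEquiv_C (e : MvPolynomial σ R ≃ₐ[R] MvPolynomial σ R) (r : R) : e (C r) = C r :=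
  e.commutes r

theorem algEquiv_ext {e e' : MvPolynomial σ R ≃ₐ[R] MvPolynomial σ R}
    (h : ∀ i, e (X i) = e' (X i)) : e = e' :=
  AlgEquiv.coe_toAlgHom_injective (algHom_ext h)

variable [DecidableEq σ]

theorem aeval_update_X_of_mem_supported_compl {i : σ} {f : MvPolynomial σ R}
    (hf : f ∈ supported R {i}ᶜ) (g : MvPolynomial σ R) : aeval (update X i g) f = f := by
  conv_rhs => rw [← aeval_X_left_apply f]
  refine hom_congr_vars (f₁ := (aeval (update X i g)).toRingHom) (f₂ := (aeval X).toRingHom)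
    (by ext; simp) (fun j hj _ => ?_) rfl
  simp [Function.update_of_ne (mem_supported.1 hf hj : j ≠ i)]

theorem aeval_update_X_add_comp_aeval_update_X_sub {i : σ} {f : MvPolynomial σ R}
    (hf : f ∈ supported R {i}ᶜ) :
    (aeval (update X i (X i + f))).comp (aeval (update X i (X i - f))) = AlgHom.id R _ := by
  refine algHom_ext fun j => ?_
  rcases eq_or_ne j i with rfl | hj
  · rw [AlgHom.comp_apply, aeval_X, Function.update_self, map_sub, aeval_X, Function.update_self,
      aeval_update_X_of_mem_supported_compl hf, add_sub_cancel_right, AlgHom.id_apply]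
  · simp [hj]

def elementaryAut (i : σ) (f : MvPolynomial σ R) (hf : f ∈ supported R {i}ᶜ) :
    MvPolynomial σ R ≃ₐ[R] MvPolynomial σ R :=
  AlgEquiv.ofAlgHom (aeval (update X i (X i + f))) (aeval (update X i (X i - f)))
    (aeval_update_X_add_comp_aeval_update_X_sub hf)
    (by simpa [sub_eq_add_neg] using aeval_update_X_add_comp_aeval_update_X_sub (neg_mem hf))

variable {i : σ} {f : MvPolynomial σ R} (hf : f ∈ supported R {i}ᶜ)

theorem elementaryAut_X_self : elementaryAut i f hf (X i) = X i + f := by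
  simp [elementaryAut]

theorem elementaryAut_X_of_ne {j : σ} (hj : j ≠ i) : elementaryAut i f hf (X j) = X j := by
  simp [elementaryAut, hj]

theorem elementaryAut_X (j : σ) :
    elementaryAut i f hf (X j) = if j = i then X i + f else X j := by
  split_ifs with h
  · subst h
    exact elementaryAut_X_self hf
  · exact elementaryAut_X_of_ne hf h

theorem elementaryAut_symm_X (j : σ) :
    (elementaryAut i f hf).symm (X j) = if j = i then X i - f else X j := by
  split_ifs with h
  · subst h
    simp [elementaryAut]
  · simp [elementaryAut, h]

end MvPolynomial

section ElementaryAut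

variable {R : Type*} [CommRing R] {n : ℕ} {i : Fin n} {f : MvPolynomial (Fin n) R}

theorem isElementaryAut_elementaryAut (hf : f ∈ supported R {i}ᶜ) :
    IsElementaryAut (elementaryAut i f hf) :=
  ⟨i, f, Nat.eq_zero_of_not_pos fun h => mem_supported.1 hf (mem_vars_iff_degreeOf_ne_zero.2 h.ne') rfl,
    elementaryAut_X_self hf, fun _ hj => elementaryAut_X_of_ne hf hj⟩

theorem elementaryAut_mem_EA (hf : f ∈ supported R {i}ᶜ) : elementaryAut i f hf ∈ EA R n :=
  Subgroup.subset_closure (isElementaryAut_elementaryAut hf)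

end ElementaryAut

section SquareZero

variable {R : Type*} [CommRing R]

theorem X_zero_mem_supported : (X 0 : MvPolynomial (Fin 2) R) ∈ supported R {1}ᶜ :=
  X_mem_supported_of_mem (by decide)

def alphaAut (a : R) : MvPolynomial (Fin 2) R ≃ₐ[R] MvPolynomial (Fin 2) R :=
  elementaryAut 0 (-(C a * X 1))
    (neg_mem (mul_mem (Subalgebra.algebraMap_mem _ a) (X_mem_supported_of_mem (by decide))))

def betaAut (m : ℕ) : MvPolynomial (Fin 2) R ≃ₐ[R] MvPolynomial (Fin 2) R :=
  elementaryAut 1 (-(X 0 ^ m)) (neg_mem (pow_mem X_zero_mem_supported m))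

def gammaAut (a : R) (m : ℕ) : MvPolynomial (Fin 2) R ≃ₐ[R] MvPolynomial (Fin 2) R :=
  elementaryAut 1 ((X 0 + C a * X 0 ^ m) ^ m - X 0 ^ m)
    (sub_mem (pow_mem (add_mem X_zero_mem_supported
      (mul_mem (Subalgebra.algebraMap_mem _ a) (pow_mem X_zero_mem_supported m))) m)
      (pow_mem X_zero_mem_supported m))

def omegaAut (a : R) (m : ℕ) : MvPolynomial (Fin 2) R ≃ₐ[R] MvPolynomial (Fin 2) R :=
  gammaAut a m * (betaAut m)⁻¹ * (alphaAut a)⁻¹ * betaAut m * alphaAut a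

theorem omegaAut_mem_EA (a : R) (m : ℕ) : omegaAut a m ∈ EA R 2 :=
  mul_mem (mul_mem (mul_mem (mul_mem (elementaryAut_mem_EA _) (inv_mem (elementaryAut_mem_EA _)))
    (inv_mem (elementaryAut_mem_EA _))) (elementaryAut_mem_EA _)) (elementaryAut_mem_EA _)

variable {a : R}

-- Proved by `rw`: when `simp` unfolds these products via `rfl`-lemmas, kernel checking times out.
theorem omegaAut_apply (m : ℕ) (p : MvPolynomial (Fin 2) R) :
    omegaAut a m p =
      gammaAut a m ((betaAut m).symm ((alphaAut a).symm (betaAut m (alphaAut a p)))) := by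
  rw [omegaAut, AlgEquiv.mul_apply, AlgEquiv.mul_apply, AlgEquiv.mul_apply, AlgEquiv.mul_apply,
    AlgEquiv.aut_inv, AlgEquiv.aut_inv]

theorem C_mul_C_eq_zero (ha : a ^ 2 = 0) : (C a * C a : MvPolynomial (Fin 2) R) = 0 := by
  rw [← map_mul, ← sq, ha, map_zero]

theorem omegaAut_X_zero (ha : a ^ 2 = 0) (m : ℕ) : omegaAut a m (X 0) = X 0 + C a * X 0 ^ m := by
  have hε := C_mul_C_eq_zero ha
  rw [omegaAut_apply]
  simp only [alphaAut, betaAut, gammaAut, elementaryAut_X, elementaryAut_symm_X, Fin.reduceEq,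
    reduceIte, algEquiv_C, map_neg, map_add, map_sub, map_mul, map_pow]
  linear_combination
    C a * add_mul_pow_of_mul_self_eq_zero hε (X 0) (X 1 + (X 0 + C a * X 0 ^ m) ^ m) m
      + ((m : MvPolynomial (Fin 2) R) * X 0 ^ (m - 1) * (X 1 + (X 0 + C a * X 0 ^ m) ^ m)) * hε

theorem omegaAut_X_one (ha : a ^ 2 = 0) (m : ℕ) :
    omegaAut a m (X 1) = (1 - (m : MvPolynomial (Fin 2) R) * C a * X 0 ^ (m - 1)) * X 1 := by
  have hε := C_mul_C_eq_zero ha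
  rw [omegaAut_apply]
  simp only [alphaAut, betaAut, gammaAut, elementaryAut_X, elementaryAut_symm_X, Fin.reduceEq,
    reduceIte, algEquiv_C, map_neg, map_add, map_sub, map_mul, map_pow]
  linear_combination (1 - (m : MvPolynomial (Fin 2) R) * C a * X 0 ^ (m - 1)) *
      add_mul_pow_of_mul_self_eq_zero hε (X 0) (X 0 ^ m) m
    - add_mul_pow_of_mul_self_eq_zero hε (X 0) (X 1 + (X 0 + C a * X 0 ^ m) ^ m) m
    - ((m : MvPolynomial (Fin 2) R) ^ 2 * X 0 ^ (m - 1) * X 0 ^ (m - 1) * X 0 ^ m) * hε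

end SquareZero

/-- `X` is `X 0` and `Z` is `X 1`; the geometric composite `α β α⁻¹ β⁻¹ γ` is the product
`γ * β⁻¹ * α⁻¹ * β * α` of algebra automorphisms. -/
theorem exists_aut_of_sq_zero_general
    (R : Type*) [CommRing R] (a : R) (ha : a ^ 2 = 0) (m : ℕ) :
    ∃ ω : MvPolynomial (Fin 2) R ≃ₐ[R] MvPolynomial (Fin 2) R,
      ω (X 0) = X 0 + C a * X 0 ^ m ∧
      ω (X 1) = (1 - (m : MvPolynomial (Fin 2) R) * C a * X 0 ^ (m - 1)) * X 1 ∧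
      ω ∈ EA R 2 ∧
      ∀ α β γ : MvPolynomial (Fin 2) R ≃ₐ[R] MvPolynomial (Fin 2) R,
        α (X 0) = X 0 - C a * X 1 → α (X 1) = X 1 →
        β (X 0) = X 0 → β (X 1) = X 1 - X 0 ^ m →
        γ (X 0) = X 0 → γ (X 1) = X 1 + (X 0 + C a * X 0 ^ m) ^ m - X 0 ^ m →
        ω = γ * β⁻¹ * α⁻¹ * β * α := by
  refine ⟨omegaAut a m, omegaAut_X_zero ha m, omegaAut_X_one ha m, omegaAut_mem_EA a m, ?_⟩
  intro α β γ hα0 hα1 hβ0 hβ1 hγ0 hγ1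
  have hα : α = alphaAut a := algEquiv_ext <| Fin.forall_fin_two.2
    ⟨by simp [hα0, alphaAut, elementaryAut_X, sub_eq_add_neg],
      by simp [hα1, alphaAut, elementaryAut_X]⟩
  have hβ : β = betaAut m := algEquiv_ext <| Fin.forall_fin_two.2
    ⟨by simp [hβ0, betaAut, elementaryAut_X],
      by simp [hβ1, betaAut, elementaryAut_X, sub_eq_add_neg]⟩
  have hγ : γ = gammaAut a m := algEquiv_ext <| Fin.forall_fin_two.2
    ⟨by simp [hγ0, gammaAut, elementaryAut_X],
      by simp [hγ1, gammaAut, elementaryAut_X, add_sub_assoc]⟩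
  rw [hα, hβ, hγ, omegaAut]

/-- Let `a ∈ R` with `a² = 0` and `m ≥ 1`.  The map `ω = (X + aX^m, (1 - m a X^{m-1}) Z)`
is an `R`-algebra automorphism of `R[X,Z]`, it is a product of elementary automorphisms, and
explicitly `ω = α β α⁻¹ β⁻¹ γ` (geometric composition; equivalently, as algebra automorphisms,
`ω = γ * β⁻¹ * α⁻¹ * β * α`) for `α = (X - aZ, Z)`, `β = (X, Z - X^m)`,
`γ = (X, Z + (X + aX^m)^m - X^m)`.  Here the variable `X` is `X 0` and `Z` is `X 1`. -/
theorem exists_aut_of_sq_zero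
    (R : Type*) [CommRing R] (a : R) (ha : a ^ 2 = 0) (m : ℕ) (hm : 1 ≤ m) :
    ∃ ω : MvPolynomial (Fin 2) R ≃ₐ[R] MvPolynomial (Fin 2) R,
      ω (X 0) = X 0 + C a * X 0 ^ m ∧
      ω (X 1) = (1 - (m : MvPolynomial (Fin 2) R) * C a * X 0 ^ (m - 1)) * X 1 ∧
      ω ∈ EA R 2 ∧
      ∀ α β γ : MvPolynomial (Fin 2) R ≃ₐ[R] MvPolynomial (Fin 2) R,
        α (X 0) = X 0 - C a * X 1 → α (X 1) = X 1 →
        β (X 0) = X 0 → β (X 1) = X 1 - X 0 ^ m →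
        γ (X 0) = X 0 → γ (X 1) = X 1 + (X 0 + C a * X 0 ^ m) ^ m - X 0 ^ m →
        ω = γ * β⁻¹ * α⁻¹ * β * α :=
  exists_aut_of_sq_zero_general R a ha m

end
end

section
/- Let R be a commutative ring, 𝔞 ⊆ R an ideal with 𝔞² = (0), and g, h ∈ 𝔞[X,Y] with ∂g/∂X + ∂h/∂Y = 0, where R is a Q-algebra. Then there exists p ∈ 𝔞[X,Y] with g = ∂p/∂Y and h = -∂p/∂X. -/
/-!
Integrate `g` in `Y` to get `p₁` with `∂p₁/∂Y = g`. By the divergence condition and the symmetry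
of second partial derivatives, `r = h + ∂p₁/∂X` satisfies `∂r/∂Y = 0`, so integrating `r` in `X`
corrects `p₁` without changing its `Y`-derivative. Integration only divides coefficients by
positive integers, which is where `ℚ ⊆ R` is needed, and so keeps them in `𝔞`.
-/

open MvPolynomial

noncomputable section

namespace MvPolynomial

variable {σ R : Type*}

theorem pderiv_comm [CommSemiring R] (i j : σ) (f : MvPolynomial σ R) :
    pderiv i (pderiv j f) = pderiv j (pderiv i f) := by
  ext m
  simp only [coeff_pderiv, mul_assoc]
  rcases eq_or_ne i j with rfl | hij
  · rfl
  · simp only [Finsupp.add_apply, Finsupp.single_eq_of_ne hij, Finsupp.single_eq_of_ne hij.symm,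
      add_zero, add_right_comm m, mul_comm]

theorem coeff_pderiv_mem [CommSemiring R] {a : Ideal R} {f : MvPolynomial σ R}
    (hf : ∀ d, f.coeff d ∈ a) (i : σ) (m : σ →₀ ℕ) : (pderiv i f).coeff m ∈ a := by
  rw [coeff_pderiv]
  exact a.mul_mem_right _ (hf _)

section RatAlgebra

variable [CommSemiring R] [Algebra ℚ R]

theorem inv_smul_mul_natCast_add_one (n : ℕ) (c : R) :
    ((n : ℚ) + 1)⁻¹ • (c * ((n : R) + 1)) = c := by
  have hn : ((n : R) + 1) = algebraMap ℚ R ((n : ℚ) + 1) := by simp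
  rw [hn, mul_comm, ← Algebra.smul_def, smul_smul, inv_mul_cancel₀ (by positivity), one_smul]

theorem coeff_add_single_eq_zero_of_pderiv_eq_zero {j : σ} {f : MvPolynomial σ R}
    (hf : pderiv j f = 0) (m : σ →₀ ℕ) : f.coeff (m + Finsupp.single j 1) = 0 := by
  rw [← inv_smul_mul_natCast_add_one (m j) (f.coeff _), ← coeff_pderiv, hf, coeff_zero, smul_zero]

/-- The antiderivative in the variable `i` all of whose monomials are divisible by `X i`. -/
def antideriv (i : σ) (f : MvPolynomial σ R) : MvPolynomial σ R :=
  ∑ d ∈ f.support, monomial (d + Finsupp.single i 1) (((d i : ℚ) + 1)⁻¹ • f.coeff d)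

theorem coeff_antideriv_add_single (i : σ) (f : MvPolynomial σ R) (m : σ →₀ ℕ) :
    (antideriv i f).coeff (m + Finsupp.single i 1) = ((m i : ℚ) + 1)⁻¹ • f.coeff m := by
  classical
  rw [antideriv, coeff_sum, Finset.sum_eq_single m]
  · rw [coeff_monomial, if_pos rfl]
  · intro d _ hdm
    rw [coeff_monomial, if_neg (fun h => hdm (add_right_cancel h))]
  · intro hm
    rw [notMem_support_iff.mp hm, smul_zero, monomial_zero, coeff_zero]

theorem coeff_antideriv_of_eq_zero (i : σ) (f : MvPolynomial σ R) {m : σ →₀ ℕ} (hm : m i = 0) :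
    (antideriv i f).coeff m = 0 := by
  classical
  rw [antideriv, coeff_sum]
  refine Finset.sum_eq_zero fun d _ => ?_
  rw [coeff_monomial, if_neg]
  rintro rfl
  simp at hm

theorem coeff_antideriv_mem {a : Ideal R} {f : MvPolynomial σ R} (hf : ∀ d, f.coeff d ∈ a)
    (i : σ) (m : σ →₀ ℕ) : (antideriv i f).coeff m ∈ a := by
  by_cases hm : m i = 0
  · rw [coeff_antideriv_of_eq_zero i f hm]
    exact a.zero_mem
  · rw [← Finsupp.sub_add_single_one_cancel hm, coeff_antideriv_add_single, Algebra.smul_def]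
    exact a.mul_mem_left _ (hf _)

theorem pderiv_antideriv (i : σ) (f : MvPolynomial σ R) : pderiv i (antideriv i f) = f := by
  ext m
  rw [coeff_pderiv, coeff_antideriv_add_single, smul_mul_assoc, inv_smul_mul_natCast_add_one]

theorem pderiv_antideriv_of_ne {i j : σ} (hij : i ≠ j) {f : MvPolynomial σ R}
    (hf : pderiv j f = 0) : pderiv j (antideriv i f) = 0 := by
  ext m
  suffices (antideriv i f).coeff (m + Finsupp.single j 1) = 0 by
    rw [coeff_pderiv, this, zero_mul, coeff_zero]
  by_cases hm : m i = 0
  · exact coeff_antideriv_of_eq_zero i f (by simp [hm, Finsupp.single_eq_of_ne hij])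
  · rw [← Finsupp.sub_add_single_one_cancel hm, add_right_comm, coeff_antideriv_add_single,
      coeff_add_single_eq_zero_of_pderiv_eq_zero hf, smul_zero]

end RatAlgebra

theorem exists_potential_of_pderiv_add_pderiv_eq_zero [CommRing R] [Algebra ℚ R] {a : Ideal R}
    {i j : σ} (hij : i ≠ j) {g h : MvPolynomial σ R} (hg : ∀ d, g.coeff d ∈ a)
    (hh : ∀ d, h.coeff d ∈ a) (hdiv : pderiv i g + pderiv j h = 0) :
    ∃ p : MvPolynomial σ R, (∀ d, p.coeff d ∈ a) ∧ pderiv j p = g ∧ pderiv i p = -h := by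
  set r := h + pderiv i (antideriv j g)
  have hr : pderiv j r = 0 := by
    rw [map_add, pderiv_comm, pderiv_antideriv, add_comm, hdiv]
  have hr_mem : ∀ d, r.coeff d ∈ a := fun d =>
    a.add_mem (hh d) (coeff_pderiv_mem (coeff_antideriv_mem hg j) i d)
  refine ⟨antideriv j g - antideriv i r, fun d => ?_, ?_, ?_⟩
  · rw [coeff_sub]
    exact a.sub_mem (coeff_antideriv_mem hg j d) (coeff_antideriv_mem hr_mem i d)
  · rw [map_sub, pderiv_antideriv, pderiv_antideriv_of_ne hij hr, sub_zero]
  · rw [map_sub, pderiv_antideriv]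
    ring

end MvPolynomial

/-- `X` is the variable `X 0` and `Y` is `X 1`. -/
theorem exists_potential_of_divergence_free_general
    (R : Type*) [CommRing R] [Algebra ℚ R] (a : Ideal R)
    (g h : MvPolynomial (Fin 2) R)
    (hg : ∀ d, g.coeff d ∈ a) (hh : ∀ d, h.coeff d ∈ a)
    (hdiv : pderiv 0 g + pderiv 1 h = 0) :
    ∃ p : MvPolynomial (Fin 2) R, (∀ d, p.coeff d ∈ a) ∧
      pderiv 1 p = g ∧ pderiv 0 p = -h :=
  exists_potential_of_pderiv_add_pderiv_eq_zero (by decide) hg hh hdiv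

/-- Over a `ℚ`-algebra `R`, if `𝔞 ⊆ R` is an ideal with `𝔞² = 0` and `g, h ∈ 𝔞[X,Y]`
satisfy `∂g/∂X + ∂h/∂Y = 0`, then there is `p ∈ 𝔞[X,Y]` with `g = ∂p/∂Y` and `h = -∂p/∂X`.
Here `X` is the variable `X 0` and `Y` is `X 1`. -/
theorem exists_potential_of_divergence_free
    (R : Type*) [CommRing R] [Algebra ℚ R] (a : Ideal R) (ha : a ^ 2 = ⊥)
    (g h : MvPolynomial (Fin 2) R)
    (hg : ∀ d, g.coeff d ∈ a) (hh : ∀ d, h.coeff d ∈ a)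
    (hdiv : pderiv 0 g + pderiv 1 h = 0) :
    ∃ p : MvPolynomial (Fin 2) R, (∀ d, p.coeff d ∈ a) ∧
      pderiv 1 p = g ∧ pderiv 0 p = -h :=
  exists_potential_of_divergence_free_general R a g h hg hh hdiv

end
end

section
/- Let R be a commutative ring, t ∈ R a non-zero-divisor, and φ = X + F(X) ∈ GA_n(R) with F ∈ tR[X]^n. Then Ψ_t(φ) = Z + (1/t)F(X + tZ) lies in GA_n(R[X]) and is elementarily equivalent to φ^{[n]} in GA_{2n}(R): there exist products of elementary automorphisms ε, ε' over R with ε φ^{[n]} ε' = Ψ_t(φ). -/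
open MvPolynomial

noncomputable section

/-- A linear automorphism: each variable is sent to a homogeneous polynomial of degree 1. -/
def IsLinearAut {R : Type*} [CommRing R] {n : ℕ}
    (φ : MvPolynomial (Fin n) R ≃ₐ[R] MvPolynomial (Fin n) R) : Prop :=
  ∀ i, (φ (X i)).IsHomogeneous 1

/-- `TA R n`: the subgroup of tame automorphisms, generated by linear and elementary ones. -/
def TA (R : Type*) [CommRing R] (n : ℕ) :
    Subgroup (MvPolynomial (Fin n) R ≃ₐ[R] MvPolynomial (Fin n) R) :=
  Subgroup.closure ({e | IsElementaryAut e} ∪ {φ | IsLinearAut φ})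

/-- The Jacobian determinant of a polynomial automorphism. -/
def jacDet {R : Type*} [CommRing R] {n : ℕ}
    (φ : MvPolynomial (Fin n) R ≃ₐ[R] MvPolynomial (Fin n) R) : MvPolynomial (Fin n) R :=
  Matrix.det (Matrix.of fun i j => pderiv j (φ (X i)))

/-- Stabilization `φ^{[m]}` of an automorphism in `n` variables to one in `n + m` variables:
it acts as `φ` on the first `n` variables and fixes the last `m` variables. -/
def stab (R : Type*) [CommRing R] (n m : ℕ)
    (φ : MvPolynomial (Fin n) R ≃ₐ[R] MvPolynomial (Fin n) R) :
    MvPolynomial (Fin (n + m)) R ≃ₐ[R] MvPolynomial (Fin (n + m)) R :=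
  ((renameEquiv R (((finSumFinEquiv (m := n) (n := m)).symm).trans
      (Equiv.sumComm (Fin n) (Fin m)))).trans
    ((sumAlgEquiv R (Fin m) (Fin n)).trans
      ((mapAlgEquiv (Fin m) φ).trans
        ((sumAlgEquiv R (Fin m) (Fin n)).symm.trans
          (renameEquiv R ((Equiv.sumComm (Fin m) (Fin n)).trans finSumFinEquiv))))))

/-!
Write `X` for the first block of variables and `Z` for the second. A *shear* adds to each
variable of one block a polynomial in the other block; it is a product of elementary
automorphisms, one per shifted variable. With `σ` the shear `X ↦ X + tZ` and `ω` the shear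
`Z ↦ Z + φ⁻¹(F')(X)`, one checks `σ * φ^{[n]} * ω * σ⁻¹ = Ψ_t(φ)` on generators, applying
`σ⁻¹`, `ω`, `φ^{[n]}`, `σ` in turn:
`X ↦ X - tZ ↦ X - tZ - t φ⁻¹(F')(X) ↦ φ(X) - tZ - tF'(X) = X - tZ ↦ X` and
`Z ↦ Z ↦ Z + φ⁻¹(F')(X) ↦ Z + F'(X) ↦ Z + F'(X + tZ)`.
-/

@[simp]
lemma MvPolynomial.algEquiv_C_s8 {R σ A : Type*} [CommSemiring R] [Semiring A] [Algebra R A]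
    (f : MvPolynomial σ R ≃ₐ[R] A) (r : R) : f (C r) = algebraMap R A r :=
  algHom_C f.toAlgHom r

lemma MvPolynomial.degreeOf_rename_of_notMem_range {R σ τ : Type*} [CommSemiring R]
    {f : σ → τ} {j : τ} (hj : j ∉ Set.range f) (p : MvPolynomial σ R) :
    degreeOf j (rename f p) = 0 := by
  classical
  by_contra h
  obtain ⟨i, -, rfl⟩ := Finset.mem_image.1 (vars_rename f p (mem_vars_iff_degreeOf_ne_zero.2 h))
  exact hj ⟨i, rfl⟩

lemma MvPolynomial.algHom_ext_of_sumEquiv {R σ α β A : Type*} [CommSemiring R] [Semiring A]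
    [Algebra R A] (c : α ⊕ β ≃ σ) {f g : MvPolynomial σ R →ₐ[R] A}
    (hl : ∀ a, f (X (c (Sum.inl a))) = g (X (c (Sum.inl a))))
    (hr : ∀ b, f (X (c (Sum.inr b))) = g (X (c (Sum.inr b)))) : f = g := by
  refine algHom_ext fun j => ?_
  obtain ⟨a | b, rfl⟩ := c.surjective j
  exacts [hl a, hr b]

lemma MvPolynomial.sumAlgEquiv_symm_C {R S₁ S₂ : Type*} [CommSemiring R]
    (p : MvPolynomial S₂ R) : (sumAlgEquiv R S₁ S₂).symm (C p) = rename Sum.inr p :=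
  (AlgEquiv.symm_apply_eq _).2
    (AlgHom.congr_fun (sumAlgEquiv_comp_rename_inr R S₁ S₂) p).symm

section Stab

variable {R : Type*} [CommRing R] {n m : ℕ}
  (φ : MvPolynomial (Fin n) R ≃ₐ[R] MvPolynomial (Fin n) R)

@[simp]
lemma stab_X_castAdd (i : Fin n) :
    stab R n m φ (X (Fin.castAdd m i)) = rename (Fin.castAdd m) (φ (X i)) := by
  simp [stab, sumAlgEquiv_symm_C, rename_rename]
  rfl

@[simp]
lemma stab_X_natAdd (i : Fin m) :
    stab R n m φ (X (Fin.natAdd n i)) = X (Fin.natAdd n i) := by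
  simp [stab]

lemma stab_rename_castAdd (p : MvPolynomial (Fin n) R) :
    stab R n m φ (rename (Fin.castAdd m) p) = rename (Fin.castAdd m) (φ p) := by
  have : (stab R n m φ).toAlgHom.comp (rename (Fin.castAdd m)) =
      (rename (Fin.castAdd m)).comp φ.toAlgHom := by
    ext i
    simp
  exact AlgHom.congr_fun this p

end Stab

section Shear

variable {R : Type*} [CommRing R] {α β σ : Type*} (c : α ⊕ β ≃ σ)

def shearAlgHom (g : β → MvPolynomial α R) : MvPolynomial σ R →ₐ[R] MvPolynomial σ R :=
  aeval fun j => X j + Sum.elim (fun _ => 0) (fun b => rename (c ∘ Sum.inl) (g b)) (c.symm j)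

variable {c}

@[simp]
lemma shearAlgHom_X_inl (g : β → MvPolynomial α R) (a : α) :
    shearAlgHom c g (X (c (Sum.inl a))) = X (c (Sum.inl a)) := by
  simp [shearAlgHom]

@[simp]
lemma shearAlgHom_X_inr (g : β → MvPolynomial α R) (b : β) :
    shearAlgHom c g (X (c (Sum.inr b))) = X (c (Sum.inr b)) + rename (c ∘ Sum.inl) (g b) := by
  simp [shearAlgHom]

@[simp]
lemma shearAlgHom_rename_inl (g : β → MvPolynomial α R) (p : MvPolynomial α R) :
    shearAlgHom c g (rename (c ∘ Sum.inl) p) = rename (c ∘ Sum.inl) p := by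
  rw [← AlgHom.comp_apply]
  congr 1
  ext a
  simp

lemma shearAlgHom_comp (g g' : β → MvPolynomial α R) :
    (shearAlgHom c g).comp (shearAlgHom c g') = shearAlgHom c (g + g') :=
  algHom_ext_of_sumEquiv c (fun a => by simp) fun b => by simp; ring

@[simp]
lemma shearAlgHom_zero : shearAlgHom c (0 : β → MvPolynomial α R) = AlgHom.id R _ :=
  algHom_ext_of_sumEquiv c (fun a => by simp) fun b => by simp

variable (c) in
def shear (g : β → MvPolynomial α R) : MvPolynomial σ R ≃ₐ[R] MvPolynomial σ R :=
  AlgEquiv.ofAlgHom (shearAlgHom c g) (shearAlgHom c (-g))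
    (by rw [shearAlgHom_comp, add_neg_cancel, shearAlgHom_zero])
    (by rw [shearAlgHom_comp, neg_add_cancel, shearAlgHom_zero])

@[simp]
lemma shear_X_inl (g : β → MvPolynomial α R) (a : α) :
    shear c g (X (c (Sum.inl a))) = X (c (Sum.inl a)) :=
  shearAlgHom_X_inl g a

@[simp]
lemma shear_X_inr (g : β → MvPolynomial α R) (b : β) :
    shear c g (X (c (Sum.inr b))) = X (c (Sum.inr b)) + rename (c ∘ Sum.inl) (g b) :=
  shearAlgHom_X_inr g b

lemma shear_rename_inr (g : β → MvPolynomial α R) (p : MvPolynomial β R) :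
    shear c g (rename (c ∘ Sum.inr) p) =
      aeval (fun b => X (c (Sum.inr b)) + rename (c ∘ Sum.inl) (g b)) p := by
  show shearAlgHom c g _ = _
  rw [shearAlgHom, aeval_rename]
  congr 1
  ext b
  simp

lemma shear_add (g g' : β → MvPolynomial α R) : shear c (g + g') = shear c g * shear c g' :=
  AlgEquiv.coe_toAlgHom_injective (shearAlgHom_comp g g').symm

lemma shear_zero : shear c (0 : β → MvPolynomial α R) = 1 :=
  AlgEquiv.coe_toAlgHom_injective shearAlgHom_zero

lemma isElementaryAut_shear_single {N : ℕ} (c : α ⊕ β ≃ Fin N) [DecidableEq β] (b : β)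
    (p : MvPolynomial α R) : IsElementaryAut (shear c (Pi.single b p)) := by
  refine ⟨c (Sum.inr b), rename (c ∘ Sum.inl) p,
    degreeOf_rename_of_notMem_range ?_ p, by simp, fun j hj => ?_⟩
  · rintro ⟨a, ha⟩
    exact Sum.inl_ne_inr (c.injective ha)
  · obtain ⟨a | b', rfl⟩ := c.surjective j
    · simp
    · have : b' ≠ b := fun h => hj (h ▸ rfl)
      simp [this]

lemma shear_mem_EA {N : ℕ} (c : α ⊕ β ≃ Fin N) (g : β → MvPolynomial α R) :
    shear c g ∈ EA R N := by
  classical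
  have : Fintype β := Fintype.ofInjective _ (c.injective.comp Sum.inr_injective)
  rw [← Finset.univ_sum_single g]
  refine Finset.sum_induction _ (fun g => shear c g ∈ EA R N) (fun g g' hg hg' => ?_) ?_
    fun b _ => Subgroup.subset_closure (isElementaryAut_shear_single c b (g b))
  · rw [shear_add]; exact mul_mem hg hg'
  · rw [shear_zero]; exact one_mem _

end Shear

section Blocks

variable {R : Type*} [CommRing R] {m n : ℕ}

def shearFst (g : Fin m → MvPolynomial (Fin n) R) :
    MvPolynomial (Fin (m + n)) R ≃ₐ[R] MvPolynomial (Fin (m + n)) R :=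
  shear ((Equiv.sumComm _ _).trans finSumFinEquiv) g

def shearSnd (g : Fin n → MvPolynomial (Fin m) R) :
    MvPolynomial (Fin (m + n)) R ≃ₐ[R] MvPolynomial (Fin (m + n)) R :=
  shear finSumFinEquiv g

@[simp]
lemma shearFst_X_castAdd (g : Fin m → MvPolynomial (Fin n) R) (i : Fin m) :
    shearFst g (X (Fin.castAdd n i)) = X (Fin.castAdd n i) + rename (Fin.natAdd m) (g i) :=
  shear_X_inr g i

@[simp]
lemma shearFst_X_natAdd (g : Fin m → MvPolynomial (Fin n) R) (i : Fin n) :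
    shearFst g (X (Fin.natAdd m i)) = X (Fin.natAdd m i) :=
  shear_X_inl g i

lemma shearFst_rename_castAdd (g : Fin m → MvPolynomial (Fin n) R) (p : MvPolynomial (Fin m) R) :
    shearFst g (rename (Fin.castAdd n) p) =
      aeval (fun i => X (Fin.castAdd n i) + rename (Fin.natAdd m) (g i)) p :=
  shear_rename_inr g p

@[simp]
lemma shearSnd_X_castAdd (g : Fin n → MvPolynomial (Fin m) R) (i : Fin m) :
    shearSnd g (X (Fin.castAdd n i)) = X (Fin.castAdd n i) :=
  shear_X_inl g i

@[simp]
lemma shearSnd_X_natAdd (g : Fin n → MvPolynomial (Fin m) R) (i : Fin n) :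
    shearSnd g (X (Fin.natAdd m i)) = X (Fin.natAdd m i) + rename (Fin.castAdd n) (g i) :=
  shear_X_inr g i

end Blocks

theorem Psi_t_elementarily_equivalent_stab_general
    (R : Type*) [CommRing R] (t : R) (n : ℕ)
    (F' : Fin n → MvPolynomial (Fin n) R)
    (φ : MvPolynomial (Fin n) R ≃ₐ[R] MvPolynomial (Fin n) R)
    (hφ : ∀ i, φ (X i) = X i + C t * F' i)
    (Ψφ : MvPolynomial (Fin (n + n)) R ≃ₐ[R] MvPolynomial (Fin (n + n)) R)
    (hΨ1 : ∀ i : Fin n, Ψφ (X (Fin.castAdd n i)) = X (Fin.castAdd n i))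
    (hΨ2 : ∀ i : Fin n, Ψφ (X (Fin.natAdd n i)) = X (Fin.natAdd n i) +
      aeval (fun j : Fin n => X (Fin.castAdd n j) + C t * X (Fin.natAdd n j)) (F' i)) :
    ∃ ε ε' : MvPolynomial (Fin (n + n)) R ≃ₐ[R] MvPolynomial (Fin (n + n)) R,
      ε ∈ EA R (n + n) ∧ ε' ∈ EA R (n + n) ∧
      ε * stab R n n φ * ε' = Ψφ := by
  let tZ : Fin n → MvPolynomial (Fin n) R := fun i => C t * X i
  refine ⟨shearFst tZ, shearSnd (fun i => φ.symm (F' i)) * shearFst (-tZ), shear_mem_EA _ _,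
    mul_mem (shear_mem_EA _ _) (shear_mem_EA _ _),
    AlgEquiv.coe_toAlgHom_injective <|
      algHom_ext_of_sumEquiv finSumFinEquiv (fun i => ?_) fun i => ?_⟩
  -- with two blocks of size `n`, `Fin.natAdd_eq_addNat` would rewrite `Fin.natAdd n i` away
  · simp [tZ, stab_rename_castAdd, hφ, hΨ1, -Fin.natAdd_eq_addNat]
    ring
  · simp [tZ, stab_rename_castAdd, shearFst_rename_castAdd, hΨ2, -Fin.natAdd_eq_addNat]

/-- Let `t ∈ R` be a non-zero-divisor and `φ = X + F(X) ∈ GA_n(R)` with `F ∈ tR[X]^n`,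
say `F = t·F'`.  Then `Ψ_t(φ) = Z + (1/t)F(X + tZ) = Z + F'(X + tZ)` lies in `GA_n(R[X])`
(formalized as the automorphism `Ψφ` of the `2n`-variable polynomial ring over `R` fixing
the `X`-block), and it is elementarily equivalent to `φ^{[n]}` in `GA_{2n}(R)`: there are
products of elementary automorphisms `ε, ε'` with `ε φ^{[n]} ε' = Ψ_t(φ)`. -/
theorem Psi_t_elementarily_equivalent_stab
    (R : Type*) [CommRing R] (t : R) (ht : t ∈ nonZeroDivisors R) (n : ℕ)
    (F' : Fin n → MvPolynomial (Fin n) R)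
    (φ : MvPolynomial (Fin n) R ≃ₐ[R] MvPolynomial (Fin n) R)
    (hφ : ∀ i, φ (X i) = X i + C t * F' i)
    (Ψφ : MvPolynomial (Fin (n + n)) R ≃ₐ[R] MvPolynomial (Fin (n + n)) R)
    (hΨ1 : ∀ i : Fin n, Ψφ (X (Fin.castAdd n i)) = X (Fin.castAdd n i))
    (hΨ2 : ∀ i : Fin n, Ψφ (X (Fin.natAdd n i)) = X (Fin.natAdd n i) +
      aeval (fun j : Fin n => X (Fin.castAdd n j) + C t * X (Fin.natAdd n j)) (F' i)) :
    ∃ ε ε' : MvPolynomial (Fin (n + n)) R ≃ₐ[R] MvPolynomial (Fin (n + n)) R,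
      ε ∈ EA R (n + n) ∧ ε' ∈ EA R (n + n) ∧
      ε * stab R n n φ * ε' = Ψφ :=
  Psi_t_elementarily_equivalent_stab_general R t n F' φ hφ Ψφ hΨ1 hΨ2
end
end

section
/- Let R be a commutative ring, t ∈ R, and Z an indeterminate. Let ψ, φ ∈ GA_n(R[Z]) be Z-vanishing (ψ(0) = φ(0) = id) and suppose their images in GA_n(R_t[Z]) coincide. Then there exists N ≥ 0 such that ψ(t^N Z) = φ(t^N Z) in GA_n(R[Z]). -/
open MvPolynomial

noncomputable section

/-- A uniform bound over a finite set for a monotone existence property. -/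
lemma exists_uniform_bound {ι : Type*} (s : Finset ι) (P : ι → ℕ → Prop)
    (mono : ∀ i N M, N ≤ M → P i N → P i M)
    (h : ∀ i ∈ s, ∃ N, P i N) : ∃ N, ∀ i ∈ s, P i N := by
  classical
  choose g hg using h
  refine ⟨s.attach.sup (fun i => g i.1 i.2), fun i hi => ?_⟩
  exact mono i _ _ (Finset.le_sup (Finset.mem_attach s ⟨i, hi⟩)) (hg i hi)

lemma pow_mul_mono {R : Type*} [CommRing R] (t a : R) {N M : ℕ} (h : N ≤ M)
    (ha : t ^ N * a = 0) : t ^ M * a = 0 := by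
  obtain ⟨d, rfl⟩ := Nat.exists_eq_add_of_le h
  rw [add_comm, pow_add, mul_assoc, ha, mul_zero]

lemma aeval_C_mul_X_coeff {R : Type*} [CommRing R] (a : R) (p : Polynomial R) (k : ℕ) :
    (Polynomial.aeval (Polynomial.C a * Polynomial.X) p).coeff k = a ^ k * p.coeff k := by
  induction p using Polynomial.induction_on' with
  | add p q hp hq => simp [hp, hq, mul_add]
  | monomial m c =>
    simp only [Polynomial.aeval_monomial, mul_pow, ← Polynomial.C_pow,
      Polynomial.algebraMap_eq, ← map_mul, Polynomial.coeff_C_mul, Polynomial.coeff_X_pow,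
      Polynomial.coeff_monomial]
    by_cases h : m = k
    · simp [h, mul_comm]
    · simp [h, Ne.symm h]

/-- Let `t ∈ R` (possibly a zero-divisor) and `Z` an indeterminate.  If `ψ, φ ∈ GA_n(R[Z])`
are `Z`-vanishing (specializing `Z ↦ 0` gives the identity) and their images in
`GA_n(R_t[Z])` coincide, then for some `N ≥ 0` the specializations `Z ↦ t^N Z` of `ψ` and
`φ` coincide. -/
theorem eq_of_localization_eq_of_Z_vanishing
    (R : Type*) [CommRing R] (t : R) (n : ℕ)
    (ψ φ : MvPolynomial (Fin n) (Polynomial R) ≃ₐ[Polynomial R]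
      MvPolynomial (Fin n) (Polynomial R))
    (hψ0 : ∀ i, MvPolynomial.map (Polynomial.evalRingHom (0 : R)) (ψ (X i)) = X i)
    (hφ0 : ∀ i, MvPolynomial.map (Polynomial.evalRingHom (0 : R)) (φ (X i)) = X i)
    (hloc : ∀ i,
      MvPolynomial.map (Polynomial.mapRingHom (algebraMap R (Localization.Away t)))
          (ψ (X i)) =
        MvPolynomial.map (Polynomial.mapRingHom (algebraMap R (Localization.Away t)))
          (φ (X i))) :
    ∃ N : ℕ, ∀ i,
      MvPolynomial.map
          ((Polynomial.aeval (Polynomial.C t ^ N * Polynomial.X :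
            Polynomial R)).toRingHom) (ψ (X i)) =
        MvPolynomial.map
          ((Polynomial.aeval (Polynomial.C t ^ N * Polynomial.X :
            Polynomial R)).toRingHom) (φ (X i)) := by
  classical
  set d : Fin n → MvPolynomial (Fin n) (Polynomial R) :=
    fun i => ψ (X i) - φ (X i) with hd
  -- each coefficient of each coefficient of d i is annihilated by a power of t
  have key : ∀ i m k, ∃ N, t ^ N * ((d i).coeff m).coeff k = 0 := by
    intro i m k
    have h1 : Polynomial.map (algebraMap R (Localization.Away t)) ((ψ (X i)).coeff m)
        = Polynomial.map (algebraMap R (Localization.Away t)) ((φ (X i)).coeff m) := by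
      have := congrArg (fun p => MvPolynomial.coeff m p) (hloc i)
      simpa [MvPolynomial.coeff_map] using this
    have h2 : algebraMap R (Localization.Away t) (((d i).coeff m).coeff k) = 0 := by
      have := congrArg (fun p => Polynomial.coeff p k) h1
      simp only [Polynomial.coeff_map] at this
      simp [hd, MvPolynomial.coeff_sub, Polynomial.coeff_sub, map_sub, this]
    rw [IsLocalization.map_eq_zero_iff (Submonoid.powers t) (Localization.Away t)] at h2
    obtain ⟨⟨u, N, rfl⟩, hu⟩ := h2
    exact ⟨N, hu⟩
  -- make the power uniform
  have key2 : ∀ i m, ∃ N, ∀ k, t ^ N * ((d i).coeff m).coeff k = 0 := by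
    intro i m
    obtain ⟨N, hN⟩ := exists_uniform_bound ((d i).coeff m).support
      (fun k N => t ^ N * ((d i).coeff m).coeff k = 0)
      (fun k N M h => pow_mul_mono t _ h) (fun k _ => key i m k)
    refine ⟨N, fun k => ?_⟩
    by_cases hk : k ∈ ((d i).coeff m).support
    · exact hN k hk
    · rw [Polynomial.notMem_support_iff.mp hk, mul_zero]
  have key3 : ∀ i, ∃ N, ∀ m k, t ^ N * ((d i).coeff m).coeff k = 0 := by
    intro i
    obtain ⟨N, hN⟩ := exists_uniform_bound (d i).support
      (fun m N => ∀ k, t ^ N * ((d i).coeff m).coeff k = 0)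
      (fun m N M h hp k => pow_mul_mono t _ h (hp k)) (fun m _ => key2 i m)
    refine ⟨N, fun m k => ?_⟩
    by_cases hm : m ∈ (d i).support
    · exact hN m hm k
    · rw [MvPolynomial.notMem_support_iff.mp hm, Polynomial.coeff_zero, mul_zero]
  obtain ⟨N, hN⟩ := exists_uniform_bound (Finset.univ : Finset (Fin n))
    (fun i N => ∀ m k, t ^ N * ((d i).coeff m).coeff k = 0)
    (fun i N M h hp m k => pow_mul_mono t _ h (hp m k)) (fun i _ => key3 i)
  -- constant coefficient of each coefficient of d i vanishes
  have h0 : ∀ i m, ((d i).coeff m).coeff 0 = 0 := by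
    intro i m
    have e1 := congrArg (fun p => MvPolynomial.coeff m p) ((hψ0 i).trans (hφ0 i).symm)
    simp only [MvPolynomial.coeff_map] at e1
    have : Polynomial.eval 0 (((d i).coeff m)) = 0 := by
      simpa [hd, MvPolynomial.coeff_sub, sub_eq_zero] using e1
    rwa [Polynomial.coeff_zero_eq_eval_zero]
  refine ⟨N, fun i => ?_⟩
  rw [← sub_eq_zero, ← map_sub]
  have : MvPolynomial.map
      ((Polynomial.aeval (Polynomial.C t ^ N * Polynomial.X : Polynomial R)).toRingHom)
      (d i) = 0 := by
    apply MvPolynomial.ext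
    intro m
    rw [MvPolynomial.coeff_map, MvPolynomial.coeff_zero]
    apply Polynomial.ext
    intro k
    have : ((Polynomial.aeval (Polynomial.C t ^ N * Polynomial.X : Polynomial R)).toRingHom
        ((d i).coeff m)).coeff k = (t ^ N) ^ k * ((d i).coeff m).coeff k := by
      have := aeval_C_mul_X_coeff (t ^ N) ((d i).coeff m) k
      simpa [map_pow] using this
    rw [this, Polynomial.coeff_zero]
    cases k with
    | zero => simp [h0 i m]
    | succ k =>
      have : (t ^ N) ^ (k + 1) = t ^ (N * k) * t ^ N := by ring
      rw [this, mul_assoc, hN i (Finset.mem_univ i) m (k + 1), mul_zero]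
  exact this

end
end
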